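/- arXiv:1507.06755 — 2 statements merged into one kernel-verified Lean document; each statement's English description precedes it below -/
import Mathlib

section
/- If λ ∈ Γ_m, then for every index j with λ_j among the m largest coordinates (i.e. j ≤ m in decreasing order), one has λ_j · S_{m-1;j}(λ) ≥ θ · S_m(λ), where θ > 0 depends only on n and m. -/
open Finset

/-- The k-th elementary symmetric polynomial of n real variables. -/
noncomputable def S (n : ℕ) (k : ℕ) (lam : Fin n → ℝ) : ℝ :=
  ∑ A ∈ Finset.powersetCard k (Finset.univ : Finset (Fin n)), ∏ i ∈ A, lam i

/-- The Gårding cone Γ_m. -/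
def GammaCone (n m : ℕ) : Set (Fin n → ℝ) :=
  {lam | ∀ k, 1 ≤ k → k ≤ m → 0 < S n k lam}

/-- Restricted elementary symmetric polynomial: the k-th elementary symmetric
polynomial of the variables with indices in T. -/
noncomputable def SRes (n : ℕ) (T : Finset (Fin n)) (k : ℕ) (lam : Fin n → ℝ) : ℝ :=
  ∑ A ∈ Finset.powersetCard k T, ∏ i ∈ A, lam i

/-!
Write `S_m = S_{m;j} + λ_j S_{m-1;j}` and induct on the number of variables. If
`S_{m;j} > 0`, then `λ` with `λ_j` deleted lies in `Γ_m` again, and the induction hypothesis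
at the largest remaining entry not exceeding `λ_j` gives `S_{m;j} ≤ (N - m) λ_j S_{m-1;j}`;
hence `S_m ≤ (n - m + 1) λ_j S_{m-1;j}`. That `λ_j > 0` comes from the fact that an element
of `Γ_m` has at least `m` positive entries.

Both facts rest on: deleting a variable maps `Γ_m` into `Γ_{m-1}`. If `S_{k+1;j}(λ) ≤ 0`
while the lower ones are positive, shift `λ` along `(1, …, 1)`, which preserves `Γ_m`, to a
point where `S_{k+1;j}` vanishes. Newton's inequality, from Laguerre's inequality for a
derivative of the real-rooted polynomial `∏ (X + λ_i)`, then gives `S_{k+2;j} ≤ 0`, hence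
`S_{k+2} = S_{k+2;j} ≤ 0`, a contradiction.
-/

open Polynomial

namespace Polynomial

theorem coeff_le_coeff_taylor {R : Type*} [CommSemiring R] [PartialOrder R] [IsOrderedRing R]
    {p : R[X]} {r : R} (hr : 0 ≤ r) {k : ℕ} (hp : ∀ i, k ≤ i → 0 ≤ p.coeff i) :
    p.coeff k ≤ (taylor r p).coeff k := by
  have hterm : ∀ i, 0 ≤ (hasseDeriv k p).coeff i * r ^ i := fun i => by
    rw [hasseDeriv_coeff]
    have := hp (i + k) (Nat.le_add_left k i)
    positivity
  rw [taylor_coeff, eval_eq_sum_range]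
  calc p.coeff k = (hasseDeriv k p).coeff 0 * r ^ 0 := by simp [hasseDeriv_coeff]
    _ ≤ _ := Finset.single_le_sum (fun i _ => hterm i) (by simp)

theorem Splits.iterate_derivative {p : ℝ[X]} (hp : p.Splits) (k : ℕ) :
    (derivative^[k] p).Splits := by
  induction k with
  | zero => exact hp
  | succ k ih =>
    rw [Function.iterate_succ_apply']
    rw [splits_iff_card_roots] at ih ⊢
    have := card_roots_le_derivative (derivative^[k] p)
    have := natDegree_derivative_le (derivative^[k] p)
    have := card_roots' (derivative (derivative^[k] p))
    omega

section Laguerre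

variable {R : Type*} [CommRing R] [LinearOrder R] [IsStrictOrderedRing R]

/- Laguerre's inequality `p p'' ≤ p'²` for real-rooted `p`, read off at `0`. -/
theorem two_mul_coeff_zero_mul_coeff_two_le_multiset_prod_X_sub_C (s : Multiset R) :
    2 * ((s.map fun a => X - C a).prod.coeff 0) * (s.map fun a => X - C a).prod.coeff 2 ≤
      (s.map fun a => X - C a).prod.coeff 1 ^ 2 := by
  induction s using Multiset.induction_on with
  | empty => simp [coeff_one]
  | cons a s ih =>
    simp only [Multiset.map_cons, Multiset.prod_cons]
    generalize (s.map fun a => X - C a).prod = q at ih ⊢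
    have h0 : ((X - C a) * q).coeff 0 = -a * q.coeff 0 := by simp
    have h1 : ((X - C a) * q).coeff 1 = q.coeff 0 - a * q.coeff 1 := by
      simp [sub_mul, coeff_C_mul]
    have h2 : ((X - C a) * q).coeff 2 = q.coeff 1 - a * q.coeff 2 := by
      simp [sub_mul, coeff_C_mul, coeff_X_mul]
    rw [h0, h1, h2]
    nlinarith [sq_nonneg (q.coeff 0), mul_le_mul_of_nonneg_left ih (sq_nonneg a)]

theorem Splits.two_mul_coeff_zero_mul_coeff_two_le {p : R[X]} (hp : p.Splits) :
    2 * p.coeff 0 * p.coeff 2 ≤ p.coeff 1 ^ 2 := by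
  rw [hp.eq_prod_roots]
  simp only [coeff_C_mul]
  nlinarith [mul_le_mul_of_nonneg_left
    (two_mul_coeff_zero_mul_coeff_two_le_multiset_prod_X_sub_C p.roots) (sq_nonneg p.leadingCoeff)]

end Laguerre

end Polynomial

theorem Finset.exists_le_and_filter_lt_subset {α β : Type*} [LinearOrder β] {s : Finset α}
    {f : α → β} {x : β} (h : #(s.filter (x < f ·)) < #s) :
    ∃ i ∈ s, f i ≤ x ∧ s.filter (f i < f ·) ⊆ s.filter (x < f ·) := by
  have hW : (s.filter (f · ≤ x)).Nonempty := by
    rw [nonempty_iff_ne_empty, Ne, filter_eq_empty_iff]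
    intro hW
    rw [filter_true_of_mem fun i hi => not_le.1 (hW hi)] at h
    exact h.false
  obtain ⟨i, hiW, hmax⟩ := exists_max_image _ f hW
  rw [mem_filter] at hiW
  refine ⟨i, hiW.1, hiW.2, fun i' hi' => ?_⟩
  rw [mem_filter] at hi' ⊢
  exact ⟨hi'.1, lt_of_not_ge fun hle => (hmax i' (mem_filter.2 ⟨hi'.1, hle⟩)).not_gt hi'.2⟩

theorem Antitone.card_filter_lt_le {α : Type*} [LinearOrder α] {n : ℕ} {f : Fin n → α}
    (hf : Antitone f) (j : Fin n) : #(univ.filter (f j < f ·)) ≤ j := by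
  calc #(univ.filter (f j < f ·)) ≤ #(Iio j) := card_le_card fun i hi => by
        rw [mem_filter] at hi
        exact mem_Iio.2 (lt_of_not_ge fun hji => (hf hji).not_gt hi.2)
    _ = j := Fin.card_Iio j

section SRes

variable {n : ℕ}

@[simp]
theorem SRes_zero (T : Finset (Fin n)) (lam : Fin n → ℝ) : SRes n T 0 lam = 1 := by
  simp [SRes]

theorem SRes_eq_zero_of_card_lt {T : Finset (Fin n)} {k : ℕ} (h : #T < k) (lam : Fin n → ℝ) :
    SRes n T k lam = 0 := by
  simp [SRes, powersetCard_eq_empty.2 h]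

theorem le_card_of_SRes_pos {T : Finset (Fin n)} {k : ℕ} {lam : Fin n → ℝ}
    (h : 0 < SRes n T k lam) : k ≤ #T := by
  by_contra hk
  exact h.ne' (SRes_eq_zero_of_card_lt (not_le.1 hk) lam)

theorem SRes_succ_erase {T : Finset (Fin n)} {j : Fin n} (hj : j ∈ T) (k : ℕ)
    (lam : Fin n → ℝ) :
    SRes n T (k + 1) lam = SRes n (T.erase j) (k + 1) lam + lam j * SRes n (T.erase j) k lam := by
  have hj' : j ∉ T.erase j := notMem_erase j T
  conv_lhs => rw [← insert_erase hj]
  rw [SRes, powersetCard_succ_insert hj', sum_union, sum_image, SRes, SRes, mul_sum]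
  · refine congrArg _ (sum_congr rfl fun A hA => ?_)
    rw [prod_insert fun h => hj' ((mem_powersetCard.1 hA).1 h)]
  · intro A hA B hB hAB
    rw [← erase_insert fun h => hj' ((mem_powersetCard.1 hA).1 h),
      ← erase_insert fun h => hj' ((mem_powersetCard.1 hB).1 h), hAB]
  · refine disjoint_left.2 fun A hA hA' => ?_
    obtain ⟨B, -, rfl⟩ := mem_image.1 hA'
    exact hj' ((mem_powersetCard.1 hA).1 (mem_insert_self j B))

theorem SRes_pos_of_forall_pos {T : Finset (Fin n)} {k : ℕ} {lam : Fin n → ℝ}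
    (h : ∀ i ∈ T, 0 < lam i) (hk : k ≤ #T) : 0 < SRes n T k lam :=
  sum_pos (fun _ hA => prod_pos fun i hi => h i ((mem_powersetCard.1 hA).1 hi))
    (powersetCard_nonempty.2 hk)

theorem continuous_SRes_add_const (T : Finset (Fin n)) (k : ℕ) (lam : Fin n → ℝ) :
    Continuous fun s : ℝ => SRes n T k (fun i => lam i + s) :=
  continuous_finsetSum _ fun _ _ => continuous_finsetProd _ fun _ _ =>
    continuous_const.add continuous_id

theorem coeff_prod_X_add_C_card_sub (T : Finset (Fin n)) (lam : Fin n → ℝ) {k : ℕ}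
    (hk : k ≤ #T) : (∏ i ∈ T, (X + C (lam i))).coeff (#T - k) = SRes n T k lam := by
  rw [prod_X_add_C_coeff T lam (Nat.sub_le _ _), Nat.sub_sub_self hk, SRes]

theorem taylor_prod_X_add_C (T : Finset (Fin n)) (lam : Fin n → ℝ) (s : ℝ) :
    taylor s (∏ i ∈ T, (X + C (lam i))) = ∏ i ∈ T, (X + C (lam i + s)) := by
  have h := map_prod (taylorAlgHom s) (fun i => X + C (lam i)) T
  simp only [taylorAlgHom_apply, map_add, taylor_X, taylor_C] at h
  rw [h]
  refine prod_congr rfl fun i _ => ?_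
  rw [C_add]
  ring

theorem SRes_le_SRes_add_const {T : Finset (Fin n)} {k : ℕ} {lam : Fin n → ℝ}
    (hlam : ∀ r ≤ k, 0 ≤ SRes n T r lam) {s : ℝ} (hs : 0 ≤ s) :
    SRes n T k lam ≤ SRes n T k (fun i => lam i + s) := by
  rcases lt_or_ge #T k with hk | hk
  · rw [SRes_eq_zero_of_card_lt hk, SRes_eq_zero_of_card_lt hk]
  rw [← coeff_prod_X_add_C_card_sub T lam hk, ← coeff_prod_X_add_C_card_sub _ _ hk,
    ← taylor_prod_X_add_C]
  refine coeff_le_coeff_taylor hs fun i hi => ?_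
  rcases le_or_gt i #T with hiT | hiT
  · rw [← Nat.sub_sub_self hiT, coeff_prod_X_add_C_card_sub T lam (Nat.sub_le _ _)]
    exact hlam _ (by omega)
  · rw [coeff_eq_zero_of_natDegree_lt]
    simpa [natDegree_prod_of_monic _ _ fun i _ => monic_X_add_C _] using hiT

theorem SRes_add_two_nonpos {V : Finset (Fin n)} {μ : Fin n → ℝ} {k : ℕ}
    (hk : 0 < SRes n V k μ) (hk1 : SRes n V (k + 1) μ = 0) : SRes n V (k + 2) μ ≤ 0 := by
  rcases lt_or_ge #V (k + 2) with hV | hV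
  · exact (SRes_eq_zero_of_card_lt hV μ).le
  set a := #V - (k + 2)
  set g := derivative^[a] (∏ i ∈ V, (X + C (μ i)))
  have hcoeff : ∀ i r, i + r = k + 2 →
      g.coeff i = ((i + a).descFactorial a : ℝ) * SRes n V r μ := by
    intro i r hir
    rw [coeff_iterate_derivative, nsmul_eq_mul, show i + a = #V - r by omega,
      coeff_prod_X_add_C_card_sub _ _ (by omega)]
  have hc : ∀ i, (0 : ℝ) < (i + a).descFactorial a := fun i => by
    exact_mod_cast Nat.pos_of_ne_zero (by rw [Ne, Nat.descFactorial_eq_zero_iff_lt]; omega)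
  have hg : 2 * g.coeff 0 * g.coeff 2 ≤ g.coeff 1 ^ 2 :=
    ((Splits.prod fun i _ => Splits.X_add_C (μ i)).iterate_derivative a)
      |>.two_mul_coeff_zero_mul_coeff_two_le
  rw [hcoeff 0 (k + 2) (by ring), hcoeff 1 (k + 1) (by ring), hcoeff 2 k (by ring), hk1] at hg
  nlinarith [mul_pos (mul_pos (hc 0) (hc 2)) hk]

end SRes

section GammaConeOn

variable {n : ℕ}

-- `GammaCone n m` is definitionally `GammaConeOn univ m`.
def GammaConeOn (T : Finset (Fin n)) (m : ℕ) : Set (Fin n → ℝ) :=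
  {lam | ∀ k, 1 ≤ k → k ≤ m → 0 < SRes n T k lam}

theorem add_const_mem_gammaConeOn {T : Finset (Fin n)} {m : ℕ} {lam : Fin n → ℝ}
    (hlam : lam ∈ GammaConeOn T m) {s : ℝ} (hs : 0 ≤ s) :
    (fun i => lam i + s) ∈ GammaConeOn T m := fun k hk1 hkm =>
  (hlam k hk1 hkm).trans_le <| SRes_le_SRes_add_const (fun r hr => by
    rcases Nat.eq_zero_or_pos r with rfl | hr0
    · simp
    · exact (hlam r hr0 (hr.trans hkm)).le) hs

theorem SRes_erase_pos {T : Finset (Fin n)} {m : ℕ} {lam : Fin n → ℝ}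
    (hlam : lam ∈ GammaConeOn T m) {j : Fin n} (hj : j ∈ T) {k : ℕ} (hk : k < m) :
    0 < SRes n (T.erase j) k lam := by
  induction k generalizing lam with
  | zero => simp
  | succ k ih =>
    by_contra! hneg
    obtain ⟨M, hM⟩ := (T.image fun i => -lam i).exists_le
    have hbig : ∀ i ∈ T.erase j, 0 < lam i + (max M 0 + 1) := fun i hi => by
      have := hM _ (mem_image_of_mem _ (mem_of_mem_erase hi))
      linarith [le_max_left M 0]
    have hcard : k + 1 ≤ #(T.erase j) := by
      have := le_card_of_SRes_pos (hlam m (by omega) le_rfl)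
      rw [card_erase_of_mem hj]
      omega
    obtain ⟨s, hs, hzero : SRes n (T.erase j) (k + 1) _ = 0⟩ :=
      intermediate_value_Icc (by positivity)
        (continuous_SRes_add_const (T.erase j) (k + 1) lam).continuousOn
        ⟨by simpa using hneg, (SRes_pos_of_forall_pos hbig hcard).le⟩
    have hμ := add_const_mem_gammaConeOn hlam hs.1
    have hnewton := SRes_add_two_nonpos (ih hμ (by omega)) hzero
    have hT := hμ (k + 2) (by omega) (by omega)
    rw [SRes_succ_erase hj (k + 1), hzero, mul_zero, add_zero] at hT
    exact hnewton.not_gt hT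

theorem erase_mem_gammaConeOn_of_nonpos {T : Finset (Fin n)} {m : ℕ} {lam : Fin n → ℝ}
    (hlam : lam ∈ GammaConeOn T m) {t : Fin n} (ht : t ∈ T) (ht0 : lam t ≤ 0) :
    lam ∈ GammaConeOn (T.erase t) m := fun k hk1 hkm => by
  obtain ⟨p, rfl⟩ : ∃ p, k = p + 1 := ⟨k - 1, by omega⟩
  have hT := hlam (p + 1) hk1 hkm
  rw [SRes_succ_erase ht] at hT
  nlinarith [SRes_erase_pos hlam ht (k := p) (by omega)]

theorem filter_pos_mem_gammaConeOn {T : Finset (Fin n)} {m : ℕ} {lam : Fin n → ℝ}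
    (hlam : lam ∈ GammaConeOn T m) : lam ∈ GammaConeOn (T.filter (0 < lam ·)) m := by
  suffices ∀ U ⊆ T.filter (lam · ≤ 0), lam ∈ GammaConeOn (T \ U) m by
    simpa [← filter_not] using this _ subset_rfl
  intro U
  induction U using Finset.induction_on with
  | empty => simpa
  | insert t U htU ih =>
    intro hsub
    rw [insert_subset_iff, mem_filter] at hsub
    rw [sdiff_insert]
    exact erase_mem_gammaConeOn_of_nonpos (ih hsub.2) (mem_sdiff.2 ⟨hsub.1.1, htU⟩) hsub.1.2

theorem pos_of_card_filter_lt {T : Finset (Fin n)} {m : ℕ} {lam : Fin n → ℝ}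
    (hlam : lam ∈ GammaConeOn T m) {j : Fin n} (hj : #(T.filter (lam j < lam ·)) < m) :
    0 < lam j := by
  by_contra! hj0
  have hpos := le_card_of_SRes_pos (filter_pos_mem_gammaConeOn hlam m (by omega) le_rfl)
  have hsub : T.filter (0 < lam ·) ⊆ T.filter (lam j < lam ·) :=
    monotone_filter_right T fun _ _ => hj0.trans_lt
  have := card_le_card hsub
  omega

theorem SRes_erase_le_of_nonneg {T : Finset (Fin n)} {m k : ℕ} {lam : Fin n → ℝ}
    (hlam : lam ∈ GammaConeOn T m) (hk : k ≤ m) {i : Fin n} (hi : i ∈ T) (hi0 : 0 ≤ lam i) :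
    SRes n (T.erase i) k lam ≤ SRes n T k lam := by
  rcases k with _ | p
  · simp
  · rw [SRes_succ_erase hi]
    nlinarith [SRes_erase_pos hlam hi (k := p) (by omega)]

theorem SRes_succ_le_mul_SRes_erase {T : Finset (Fin n)} {q : ℕ} {lam : Fin n → ℝ}
    (hlam : lam ∈ GammaConeOn T (q + 1)) {j : Fin n} (hj : j ∈ T)
    (hrank : #(T.filter (lam j < lam ·)) ≤ q) :
    SRes n T (q + 1) lam ≤ (#T - q) * (lam j * SRes n (T.erase j) q lam) := by
  induction T using Finset.strongInduction generalizing j with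
  | H T ih =>
  set V := T.erase j
  have hj0 : 0 < lam j := pos_of_card_filter_lt hlam (by omega)
  have hSq : 0 < SRes n V q lam := SRes_erase_pos hlam hj (by omega)
  have hqT : (q : ℝ) + 1 ≤ #T := by
    exact_mod_cast le_card_of_SRes_pos (hlam (q + 1) le_add_self le_rfl)
  have hkey : SRes n V (q + 1) lam ≤ (#T - q - 1) * (lam j * SRes n V q lam) := by
    rcases le_or_gt (SRes n V (q + 1) lam) 0 with hV | hV
    · exact hV.trans (mul_nonneg (by linarith) (mul_pos hj0 hSq).le)
    have hlamV : lam ∈ GammaConeOn V (q + 1) := fun r hr1 hr => by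
      rcases hr.lt_or_eq with hr | rfl
      · exact SRes_erase_pos hlam hj hr
      · exact hV
    have hrankV : #(V.filter (lam j < lam ·)) ≤ q :=
      (card_le_card (filter_subset_filter _ (erase_subset j T))).trans hrank
    obtain ⟨i, hiV, hij, hsub⟩ := exists_le_and_filter_lt_subset (x := lam j)
      (hrankV.trans_lt (le_card_of_SRes_pos hV))
    have hi0 : 0 < lam i := pos_of_card_filter_lt hlamV ((card_le_card hsub).trans_lt (by omega))
    have hqV : (q : ℝ) + 1 ≤ #V := by exact_mod_cast le_card_of_SRes_pos hV
    calc SRes n V (q + 1) lam ≤ (#V - q) * (lam i * SRes n (V.erase i) q lam) :=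
          ih V (erase_ssubset hj) hlamV hiV ((card_le_card hsub).trans hrankV)
      _ ≤ (#V - q) * (lam j * SRes n V q lam) := by
          refine mul_le_mul_of_nonneg_left (mul_le_mul hij ?_ ?_ hj0.le) (by linarith)
          · exact SRes_erase_le_of_nonneg hlamV (Nat.le_succ q) hiV hi0.le
          · exact (SRes_erase_pos hlamV hiV (lt_add_one q)).le
      _ = (#T - q - 1) * (lam j * SRes n V q lam) := by
          rw [card_erase_of_mem hj, Nat.cast_sub (card_pos.2 ⟨j, hj⟩)]
          ring
  rw [SRes_succ_erase hj]
  linarith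

end GammaConeOn

theorem stmt5_general (n m : ℕ) (hmn : m ≤ n) :
    ∃ θ : ℝ, 0 < θ ∧ ∀ lam ∈ GammaCone n m,
      (∀ i j : Fin n, i ≤ j → lam j ≤ lam i) →
      ∀ j : Fin n, (j : ℕ) < m →
        θ * S n m lam ≤ lam j * SRes n (Finset.univ \ {j}) (m - 1) lam := by
  have hθ : (0 : ℝ) < n - m + 1 := by
    have : (m : ℝ) ≤ n := by exact_mod_cast hmn
    linarith
  refine ⟨(n - m + 1 : ℝ)⁻¹, inv_pos.2 hθ, fun lam hlam hanti j hj => ?_⟩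
  obtain ⟨q, rfl⟩ : ∃ q, m = q + 1 := ⟨m - 1, by omega⟩
  have hmain := SRes_succ_le_mul_SRes_erase hlam (mem_univ j)
    ((Antitone.card_filter_lt_le hanti j).trans (Nat.lt_succ_iff.1 hj))
  rw [card_univ, Fintype.card_fin] at hmain
  rw [Nat.add_sub_cancel, sdiff_singleton_eq_erase, inv_mul_le_iff₀ hθ]
  exact hmain.trans_eq (by push_cast; ring)

theorem stmt5 (n m : ℕ) (hm : 1 ≤ m) (hmn : m ≤ n) :
    ∃ θ : ℝ, 0 < θ ∧ ∀ lam ∈ GammaCone n m,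
      (∀ i j : Fin n, i ≤ j → lam j ≤ lam i) →
      ∀ j : Fin n, (j : ℕ) < m →
        θ * S n m lam ≤ lam j * SRes n (Finset.univ \ {j}) (m - 1) lam :=
  stmt5_general n m hmn
end

section
/- For λ ∈ Γ_m ordered decreasingly (m ≥ 2), the quotients S_m(λ)/S_{m-1;i}(λ) are positive for all i, monotone in i in the sense that S_m/S_{m-1;n} ≤ S_m/S_{m-1;n-1} ≤ ⋯ ≤ S_m/S_{m-1;1}, and all bounded above by S_1(λ)/θ for a constant θ = θ(n,m) > 0. -/
open Finset

/-!
Deleting a coordinate of a vector in `Γ_{k+1}` leaves a vector in `Γ_k`. Otherwise, for the first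
`j` with `e_j(λ|i) ≤ 0`, the expansions `e_l(λ) = e_l(λ|i) + λ_i e_{l-1}(λ|i)` at `l = j, j + 1`
would give `e_{j-1} e_{j+1} > e_j²` for `λ|i`, against Newton's inequality. Newton's inequality for
the means `E_l = e_l / C(N, l)` goes by induction on `N`: differentiating `∏ (X - x)` keeps the
means and, by Rolle's theorem, all roots real; when `N = l + 2` the substitution `x ↦ 1/x` reduces
it to `l = 0`, which is Cauchy–Schwarz.

Hence `S_{m-1;i} > 0`, and `S_{m-1;i} - S_{m-1;j} = (λ_j - λ_i) S_{m-2;ij}` gives the monotonicity.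
For the bound, every `λ_j` is at most `S_1` since `S_1 - λ_j = S_{1;j} > 0`, and peeling off one
positive coordinate at a time shows `e_{k+1}(μ) ≤ (N - k) a e_k(μ)` for `μ ∈ Γ_k` with entries at
most `a`. With `S_m = S_{m;i} + λ_i S_{m-1;i}` this gives `θ = 1 / (n - m + 1)`.
-/

theorem Nat.choose_mul_choose_add_two_le_sq (n k : ℕ) :
    n.choose k * n.choose (k + 2) ≤ n.choose (k + 1) ^ 2 := by
  rcases Nat.lt_or_ge k n with hk | hk
  · have h1 := Nat.choose_succ_right_eq n k
    have h2 := Nat.choose_succ_right_eq n (k + 1)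
    refine Nat.le_of_mul_le_mul_right (c := (n - k) * (k + 2)) ?_
      (Nat.mul_pos (by omega) (by omega))
    calc n.choose k * n.choose (k + 2) * ((n - k) * (k + 2))
        = n.choose k * (n - k) * (n.choose (k + 2) * (k + 2)) := by ring
      _ = n.choose (k + 1) ^ 2 * ((k + 1) * (n - (k + 1))) := by rw [← h1, h2]; ring
      _ ≤ n.choose (k + 1) ^ 2 * ((n - k) * (k + 2)) := by
        refine Nat.mul_le_mul_left _ ?_
        rw [mul_comm]
        exact Nat.mul_le_mul (by omega) (by omega)
  · simp [Nat.choose_eq_zero_of_lt (show n < k + 2 by omega)]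

namespace Multiset

section CommSemiring

variable {R : Type*} [CommSemiring R]

theorem esymm_zero (s : Multiset R) : s.esymm 0 = 1 := by
  simp [esymm]

theorem esymm_one (s : Multiset R) : s.esymm 1 = s.sum := by
  simp [esymm, powersetCard_one]

theorem esymm_eq_zero_of_card_lt {s : Multiset R} {k : ℕ} (h : card s < k) : s.esymm k = 0 := by
  simp [esymm, powersetCard_eq_empty _ h]

theorem esymm_cons (a : R) (s : Multiset R) (k : ℕ) :
    (a ::ₘ s).esymm (k + 1) = s.esymm (k + 1) + a * s.esymm k := by
  simp [esymm, powersetCard_cons, map_map, sum_map_mul_left]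

theorem esymm_card (s : Multiset R) : s.esymm (card s) = s.prod := by
  simp [esymm, powersetCard_self]

end CommSemiring

theorem sq_esymm_one {R : Type*} [CommRing R] (s : Multiset R) :
    s.esymm 1 ^ 2 = (s.map (· ^ 2)).sum + 2 * s.esymm 2 := by
  induction s using Multiset.induction with
  | empty => simp [esymm_one, esymm_eq_zero_of_card_lt (s := (0 : Multiset R)) (k := 2) (by simp)]
  | cons a s ih =>
    rw [esymm_cons, esymm_cons, esymm_zero, map_cons, sum_cons]
    linear_combination ih

theorem sq_sum_le_card_mul_sum_sq {α : Type*} [Semiring α] [LinearOrder α] [IsStrictOrderedRing α]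
    [ExistsAddOfLE α] (s : Multiset α) : s.sum ^ 2 ≤ card s * (s.map (· ^ 2)).sum := by
  have h := _root_.sq_sum_le_card_mul_sum_sq (s := (Finset.univ : Finset s)) (f := ((↑) : s → α))
  rwa [Finset.sum_eq_multiset_sum, Finset.sum_eq_multiset_sum, map_univ_coe,
    ← Function.comp_def (· ^ 2), map_univ_comp_coe, Finset.card_univ, Multiset.card_coe] at h

theorem esymm_map_inv_mul_prod {K : Type*} [Field K] {s : Multiset K} (hs : ∀ x ∈ s, x ≠ 0)
    {i j : ℕ} (hij : i + j = card s) : (s.map (·⁻¹)).esymm i * s.prod = s.esymm j := by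
  induction s using Multiset.induction generalizing i j with
  | empty =>
    obtain ⟨rfl, rfl⟩ : i = 0 ∧ j = 0 := by simpa using hij
    simp [esymm_zero]
  | cons a s ih =>
    have ha : a ≠ 0 := hs a (mem_cons_self a s)
    have ih' := @ih (fun x hx => hs x (mem_cons_of_mem hx))
    rw [card_cons] at hij
    rw [map_cons, prod_cons]
    rcases i with _ | i
    · rw [zero_add] at hij
      rw [esymm_zero, one_mul, hij, ← card_cons, esymm_card, prod_cons]
    rcases j with _ | j
    · have h := ih' (i := i) (j := 0) (by omega)
      rw [esymm_zero] at h
      rw [esymm_cons, esymm_eq_zero_of_card_lt (by rw [card_map]; omega), esymm_zero, ← h]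
      field_simp
      ring
    · rw [esymm_cons, esymm_cons, ← ih' (i := i + 1) (j := j) (by omega),
        ← ih' (i := i) (j := j + 1) (by omega)]
      field_simp
      ring

open Polynomial in
/-- `t` is the multiset of roots of the derivative of `∏ (X - x)`; by Rolle's theorem it has
`card s - 1` elements. -/
theorem exists_card_eq_pred_and_esymm_eq (s : Multiset ℝ) (hs : s ≠ 0) :
    ∃ t : Multiset ℝ, card t = card s - 1 ∧
      ∀ j < card s, card s * t.esymm j = (card s - j : ℕ) * s.esymm j := by
  have hN : 0 < card s := card_pos.mpr hs
  set f : ℝ[X] := (s.map fun a => X - C a).prod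
  have hfdeg : f.natDegree = card s := natDegree_multiset_prod_X_sub_C_eq_card s
  have hfcoeff : ∀ j ≤ card s, f.coeff (card s - j) = (-1) ^ j * s.esymm j := fun j hj => by
    rw [prod_X_sub_C_coeff s (Nat.sub_le _ _), Nat.sub_sub_self hj]
  set g := derivative f
  have hgcoeff : ∀ j < card s, g.coeff (card s - 1 - j) = (card s - j : ℕ) * f.coeff (card s - j) :=
    fun j hj => by
      rw [coeff_derivative, show card s - 1 - j + 1 = card s - j by omega, mul_comm,
        ← Nat.cast_succ, show (card s - 1 - j).succ = card s - j by omega]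
  have hgdeg : g.natDegree = card s - 1 := by rw [natDegree_derivative, hfdeg]
  have hglc : g.leadingCoeff = card s := by
    rw [leadingCoeff, hgdeg, ← Nat.sub_zero (card s - 1), hgcoeff 0 hN, hfcoeff 0 (Nat.zero_le _),
      esymm_zero]
    simp
  have hgroots : card g.roots = card s - 1 := by
    have h1 : card f.roots ≤ card g.roots + 1 := card_roots_le_derivative f
    have h2 : card g.roots ≤ g.natDegree := card_roots' g
    rw [roots_multiset_prod_X_sub_C] at h1
    omega
  refine ⟨g.roots, hgroots, fun j hj => ?_⟩
  have hg := coeff_eq_esymm_roots_of_card (hgroots.trans hgdeg.symm) (k := card s - 1 - j)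
    (by omega)
  rw [hgcoeff j hj, hfcoeff j hj.le, hglc, hgdeg, Nat.sub_sub_self (by omega)] at hg
  refine mul_left_cancel₀ (pow_ne_zero j (neg_ne_zero.mpr one_ne_zero)) ?_
  linear_combination -hg


/-- For `k > card s` the binomial coefficient vanishes, so `esymmMean s k = 0`; this is why
Newton's inequality `esymmMean_mul_esymmMean_le_sq` holds without a size hypothesis. -/
noncomputable def esymmMean (s : Multiset ℝ) (k : ℕ) : ℝ := s.esymm k / (card s).choose k

theorem esymmMean_zero (s : Multiset ℝ) : s.esymmMean 0 = 1 := by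
  simp [esymmMean, esymm_zero]

theorem esymmMean_eq_zero_of_card_lt {s : Multiset ℝ} {k : ℕ} (h : card s < k) :
    s.esymmMean k = 0 := by
  simp [esymmMean, esymm_eq_zero_of_card_lt h]

theorem esymm_eq_esymmMean_mul {s : Multiset ℝ} {k : ℕ} (h : k ≤ card s) :
    s.esymm k = s.esymmMean k * (card s).choose k := by
  rw [esymmMean, div_mul_cancel₀]
  exact_mod_cast (Nat.choose_pos h).ne'

theorem exists_card_eq_pred_and_esymmMean_eq (s : Multiset ℝ) (hs : s ≠ 0) :
    ∃ t : Multiset ℝ, card t = card s - 1 ∧ ∀ j < card s, t.esymmMean j = s.esymmMean j := by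
  obtain ⟨t, ht, hst⟩ := exists_card_eq_pred_and_esymm_eq s hs
  refine ⟨t, ht, fun j hj => ?_⟩
  obtain ⟨N, hN⟩ : ∃ N, card s = N + 1 := Nat.exists_eq_add_one.mpr (card_pos.mpr hs)
  have hchoose : (N.choose j : ℝ) * (N + 1) = (N + 1).choose j * (N + 1 - j : ℕ) := by
    exact_mod_cast Nat.choose_mul_succ_eq N j
  have hst := hst j hj
  rw [esymmMean, esymmMean, ht, hN, Nat.add_sub_cancel]
  rw [hN] at hst hj
  have hpos : (0 : ℝ) < (N + 1 - j : ℕ) := by exact_mod_cast Nat.sub_pos_of_lt hj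
  have hc1 : (0 : ℝ) < N.choose j := by exact_mod_cast Nat.choose_pos (by omega)
  have hc2 : (0 : ℝ) < (N + 1).choose j := by exact_mod_cast Nat.choose_pos (by omega)
  rw [div_eq_div_iff hc1.ne' hc2.ne']
  refine mul_right_cancel₀ hpos.ne' ?_
  push_cast at hst hchoose ⊢
  linear_combination (N.choose j : ℝ) * hst - t.esymm j * hchoose

theorem esymmMean_map_inv_mul_prod {s : Multiset ℝ} (hs : ∀ x ∈ s, x ≠ 0) {i j : ℕ}
    (hij : i + j = card s) : (s.map (·⁻¹)).esymmMean i * s.prod = s.esymmMean j := by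
  rw [esymmMean, esymmMean, card_map, Nat.choose_symm_of_eq_add hij.symm, div_mul_eq_mul_div,
    esymm_map_inv_mul_prod hs hij]

theorem esymmMean_zero_mul_esymmMean_two_le_sq (s : Multiset ℝ) :
    s.esymmMean 0 * s.esymmMean 2 ≤ s.esymmMean 1 ^ 2 := by
  rw [esymmMean_zero, one_mul]
  rcases lt_or_ge (card s) 2 with hs | hs
  · rw [esymmMean_eq_zero_of_card_lt hs]; positivity
  have hN : (2 : ℝ) ≤ card s := by exact_mod_cast hs
  have hsq := sq_esymm_one s
  have hcs := sq_sum_le_card_mul_sum_sq s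
  rw [← esymm_one] at hcs
  have hN1 : (0 : ℝ) < card s - 1 := by linarith
  rw [esymmMean, esymmMean, Nat.cast_choose_two, Nat.choose_one_right, div_pow,
    div_le_div_iff₀ (by positivity) (by positivity)]
  nlinarith

theorem esymmMean_mul_esymmMean_le_sq_of_card_eq {s : Multiset ℝ} {k : ℕ} (hs : card s = k + 2) :
    s.esymmMean k * s.esymmMean (k + 2) ≤ s.esymmMean (k + 1) ^ 2 := by
  by_cases hz : (0 : ℝ) ∈ s
  · have : s.esymmMean (k + 2) = 0 := by
      rw [esymmMean, ← hs, esymm_card, prod_eq_zero hz, zero_div]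
    rw [this, mul_zero]
    positivity
  have hne : ∀ x ∈ s, x ≠ 0 := fun x hx h => hz (h ▸ hx)
  set t := s.map (·⁻¹)
  rw [← esymmMean_map_inv_mul_prod hne (i := 2) (j := k) (by omega),
    ← esymmMean_map_inv_mul_prod hne (i := 1) (j := k + 1) (by omega),
    ← esymmMean_map_inv_mul_prod hne (i := 0) (j := k + 2) (by omega)]
  have := mul_le_mul_of_nonneg_right (esymmMean_zero_mul_esymmMean_two_le_sq t) (sq_nonneg s.prod)
  linear_combination this

theorem esymmMean_mul_esymmMean_le_sq (s : Multiset ℝ) (k : ℕ) :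
    s.esymmMean k * s.esymmMean (k + 2) ≤ s.esymmMean (k + 1) ^ 2 := by
  obtain ⟨N, hN⟩ : ∃ N, card s = N := ⟨_, rfl⟩
  induction N generalizing s k with
  | zero =>
    rw [esymmMean_eq_zero_of_card_lt (k := k + 2) (by omega), mul_zero]
    positivity
  | succ N ih =>
    rcases k with _ | k
    · exact esymmMean_zero_mul_esymmMean_two_le_sq s
    rcases lt_trichotomy (N + 1) (k + 3) with hlt | heq | hgt
    · rw [esymmMean_eq_zero_of_card_lt (k := k + 1 + 2) (by omega), mul_zero]
      positivity
    · exact esymmMean_mul_esymmMean_le_sq_of_card_eq (by omega)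
    · obtain ⟨t, ht, hts⟩ := exists_card_eq_pred_and_esymmMean_eq s (card_pos.mp (by omega))
      rw [← hts _ (by omega), ← hts _ (by omega), ← hts _ (by omega)]
      exact ih t _ (by omega)

theorem esymm_mul_esymm_le_sq (s : Multiset ℝ) (k : ℕ) :
    s.esymm k * s.esymm (k + 2) ≤ s.esymm (k + 1) ^ 2 := by
  rcases lt_or_ge (card s) (k + 2) with hs | hs
  · rw [esymm_eq_zero_of_card_lt hs, mul_zero]
    positivity
  have hchoose :
      ((card s).choose k * (card s).choose (k + 2) : ℝ) ≤ (card s).choose (k + 1) ^ 2 := by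
    exact_mod_cast Nat.choose_mul_choose_add_two_le_sq _ _
  rw [esymm_eq_esymmMean_mul (by omega), esymm_eq_esymmMean_mul (by omega),
    esymm_eq_esymmMean_mul (by omega)]
  calc s.esymmMean k * (card s).choose k * (s.esymmMean (k + 2) * (card s).choose (k + 2))
      = s.esymmMean k * s.esymmMean (k + 2) * ((card s).choose k * (card s).choose (k + 2)) := by
        ring
    _ ≤ s.esymmMean (k + 1) ^ 2 * ((card s).choose k * (card s).choose (k + 2)) := by
        gcongr
        exact esymmMean_mul_esymmMean_le_sq s k
    _ ≤ s.esymmMean (k + 1) ^ 2 * (card s).choose (k + 1) ^ 2 := by gcongr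
    _ = (s.esymmMean (k + 1) * (card s).choose (k + 1)) ^ 2 := by ring

def gardingCone (m : ℕ) : Set (Multiset ℝ) := {s | ∀ k ≤ m, 0 < s.esymm k}

theorem gardingCone_anti {m m' : ℕ} (h : m ≤ m') : gardingCone m' ⊆ gardingCone m :=
  fun _ hs k hk => hs k (hk.trans h)

theorem mem_gardingCone_of_cons_mem {a : ℝ} {s : Multiset ℝ} {m : ℕ}
    (h : a ::ₘ s ∈ gardingCone (m + 1)) : s ∈ gardingCone m := by
  induction m with
  | zero => intro k hk; rw [Nat.le_zero.mp hk, esymm_zero]; exact one_pos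
  | succ m ih =>
    have hs := ih (gardingCone_anti (Nat.le_succ _) h)
    intro k hk
    rcases Nat.lt_or_eq_of_le hk with hk | rfl
    · exact hs k (by omega)
    have hm := hs m le_rfl
    have h1 := h (m + 1) (by omega)
    have h2 := h (m + 2) le_rfl
    rw [esymm_cons] at h1 h2
    by_contra! hneg
    -- the cone inequalities force `e_m e_{m+2} > e_{m+1}²`, against Newton
    have ha : 0 < a := by nlinarith
    have h3 : 0 < s.esymm (m + 2) := by nlinarith
    nlinarith [esymm_mul_esymm_le_sq s m]

theorem esymm_succ_le_mul_esymm {s : Multiset ℝ} {k : ℕ} {a : ℝ} (hs : s ∈ gardingCone k)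
    (ha : 0 ≤ a) (hsa : ∀ x ∈ s, x ≤ a) :
    s.esymm (k + 1) ≤ (card s - k : ℕ) * a * s.esymm k := by
  induction s using Multiset.strongInductionOn with | ih s ih => ?_
  rcases le_or_gt (s.esymm (k + 1)) 0 with he | he
  · exact he.trans (by have := hs k le_rfl; positivity)
  have hs' : s ∈ gardingCone (k + 1) := fun j hj =>
    (Nat.le_succ_iff.mp hj).elim (hs j) fun h => h ▸ he
  obtain ⟨b, hb, hb0⟩ : ∃ b ∈ s, 0 < b := by
    by_contra! h
    have h1 := hs' 1 (by omega)
    rw [esymm_one] at h1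
    have := sum_le_card_nsmul s 0 h
    simp only [nsmul_zero] at this
    linarith
  rw [← cons_erase hb] at hs' hsa ⊢
  set t := s.erase b
  have ht : t ∈ gardingCone k := mem_gardingCone_of_cons_mem hs'
  have hkt : k ≤ card t := by
    by_contra! h
    exact (ht k le_rfl).ne' (esymm_eq_zero_of_card_lt h)
  have iht := ih t (erase_lt.mpr hb) ht fun x hx => hsa x (mem_cons_of_mem hx)
  have hle : t.esymm k ≤ (b ::ₘ t).esymm k := by
    rcases k with _ | k
    · rw [esymm_zero, esymm_zero]
    · rw [esymm_cons]
      nlinarith [ht k (by omega)]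
  have hba : b ≤ a := hsa b (mem_cons_self b t)
  have htk := ht k le_rfl
  rw [card_cons, esymm_cons, show card t + 1 - k = (card t - k) + 1 by omega]
  push_cast
  calc t.esymm (k + 1) + b * t.esymm k ≤ ((card t - k : ℕ) + 1) * a * t.esymm k := by
        nlinarith [mul_le_mul_of_nonneg_right hba htk.le]
    _ ≤ ((card t - k : ℕ) + 1) * a * (b ::ₘ t).esymm k := by gcongr

end Multiset

theorem Finset.val_map_eq_cons_erase {ι β : Type*} [DecidableEq ι] (f : ι → β) {T : Finset ι}
    {i : ι} (hi : i ∈ T) : T.val.map f = f i ::ₘ (T.erase i).val.map f := by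
  rw [erase_val, ← Multiset.map_cons, Multiset.cons_erase (mem_val.mpr hi)]

theorem mem_gardingCone_map_erase {ι : Type*} [DecidableEq ι] {f : ι → ℝ} {T : Finset ι} {i : ι}
    (hi : i ∈ T) {k : ℕ} (h : T.val.map f ∈ Multiset.gardingCone (k + 1)) :
    (T.erase i).val.map f ∈ Multiset.gardingCone k :=
  Multiset.mem_gardingCone_of_cons_mem (Finset.val_map_eq_cons_erase f hi ▸ h)

theorem S_eq_esymm (n k : ℕ) (lam : Fin n → ℝ) : S n k lam = (univ.val.map lam).esymm k :=
  (esymm_map_val lam univ k).symm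

theorem SRes_sdiff_singleton_eq_esymm {n : ℕ} (i : Fin n) (k : ℕ) (lam : Fin n → ℝ) :
    SRes n (univ \ {i}) k lam = ((univ.erase i).val.map lam).esymm k := by
  rw [sdiff_singleton_eq_erase, esymm_map_val, SRes]

theorem map_mem_gardingCone_iff {n m : ℕ} {lam : Fin n → ℝ} :
    univ.val.map lam ∈ Multiset.gardingCone m ↔ lam ∈ GammaCone n m := by
  refine ⟨fun h k hk1 hkm => S_eq_esymm n k lam ▸ h k hkm, fun h k hkm => ?_⟩
  rcases k with _ | k
  · rw [Multiset.esymm_zero]; exact one_pos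
  · exact S_eq_esymm n _ lam ▸ h _ (by omega) hkm

section

variable {n k : ℕ} {lam : Fin n → ℝ}

theorem SRes_sdiff_singleton_pos (hlam : lam ∈ GammaCone n (k + 1)) (i : Fin n) :
    0 < SRes n (univ \ {i}) k lam := by
  rw [SRes_sdiff_singleton_eq_esymm]
  exact mem_gardingCone_map_erase (mem_univ i) (map_mem_gardingCone_iff.mpr hlam) k le_rfl

theorem le_S_one (hlam : lam ∈ GammaCone n 2) (i : Fin n) : lam i ≤ S n 1 lam := by
  have h := SRes_sdiff_singleton_pos hlam i
  rw [SRes_sdiff_singleton_eq_esymm] at h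
  rw [S_eq_esymm, Finset.val_map_eq_cons_erase lam (mem_univ i), ← zero_add 1, Multiset.esymm_cons,
    Multiset.esymm_zero]
  linarith

theorem SRes_sdiff_singleton_le (hlam : lam ∈ GammaCone n (k + 2)) {i j : Fin n}
    (hij : lam j ≤ lam i) : SRes n (univ \ {i}) (k + 1) lam ≤ SRes n (univ \ {j}) (k + 1) lam := by
  rcases eq_or_ne i j with rfl | hne
  · exact le_rfl
  have hW := mem_gardingCone_map_erase (mem_erase.mpr ⟨hne.symm, mem_univ j⟩)
    (mem_gardingCone_map_erase (mem_univ i) (map_mem_gardingCone_iff.mpr hlam)) k le_rfl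
  rw [SRes_sdiff_singleton_eq_esymm, SRes_sdiff_singleton_eq_esymm,
    Finset.val_map_eq_cons_erase lam (mem_erase.mpr ⟨hne.symm, mem_univ j⟩),
    Finset.val_map_eq_cons_erase lam (mem_erase.mpr ⟨hne, mem_univ i⟩), erase_right_comm (a := j),
    Multiset.esymm_cons, Multiset.esymm_cons]
  nlinarith

theorem S_le_mul_SRes_sdiff_singleton (hlam : lam ∈ GammaCone n (k + 2)) (i : Fin n) :
    S n (k + 2) lam ≤ (n - (k + 1) : ℕ) * S n 1 lam * SRes n (univ \ {i}) (k + 1) lam := by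
  set M := (univ.erase i).val.map lam
  have hu := map_mem_gardingCone_iff.mpr hlam
  have hlam2 : lam ∈ GammaCone n 2 :=
    map_mem_gardingCone_iff.mp (Multiset.gardingCone_anti (by omega) hu)
  have hM : M ∈ Multiset.gardingCone (k + 1) := mem_gardingCone_map_erase (mem_univ i) hu
  have hMpos := hM (k + 1) le_rfl
  have hcard : Multiset.card M = n - 1 := by simp [M]
  have hkn : k + 1 ≤ n - 1 := by
    by_contra! h
    exact hMpos.ne' (Multiset.esymm_eq_zero_of_card_lt (hcard ▸ h))
  have hS1 : ∀ x ∈ M, x ≤ S n 1 lam := by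
    intro x hx
    obtain ⟨j, -, rfl⟩ := Multiset.mem_map.mp hx
    exact le_S_one hlam2 j
  have hbound := Multiset.esymm_succ_le_mul_esymm hM (hlam 1 le_rfl (by omega)).le hS1
  rw [hcard] at hbound
  rw [S_eq_esymm, Finset.val_map_eq_cons_erase lam (mem_univ i), Multiset.esymm_cons,
    SRes_sdiff_singleton_eq_esymm, show n - (k + 1) = n - 1 - (k + 1) + 1 by omega]
  push_cast
  linarith [mul_le_mul_of_nonneg_right (le_S_one hlam2 i) hMpos.le]

end

theorem stmt7 (n m : ℕ) (hm : 2 ≤ m) (hmn : m ≤ n) :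
    ∃ θ : ℝ, 0 < θ ∧ ∀ lam ∈ GammaCone n m,
      (∀ i j : Fin n, i ≤ j → lam j ≤ lam i) →
      (∀ i : Fin n, 0 < S n m lam / SRes n (Finset.univ \ {i}) (m - 1) lam) ∧
      (∀ i j : Fin n, i ≤ j →
        S n m lam / SRes n (Finset.univ \ {j}) (m - 1) lam ≤
          S n m lam / SRes n (Finset.univ \ {i}) (m - 1) lam) ∧
      (∀ i : Fin n,
        S n m lam / SRes n (Finset.univ \ {i}) (m - 1) lam ≤ S n 1 lam / θ) := by
  obtain ⟨k, rfl⟩ : ∃ k, m = k + 2 := ⟨m - 2, by omega⟩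
  have hθ : (0 : ℝ) < (n - (k + 1) : ℕ) := by exact_mod_cast Nat.sub_pos_of_lt (by omega)
  refine ⟨((n - (k + 1) : ℕ) : ℝ)⁻¹, inv_pos.mpr hθ, fun lam hlam hanti => ?_⟩
  rw [show k + 2 - 1 = k + 1 from rfl]
  have hSm : 0 < S n (k + 2) lam := hlam (k + 2) (by omega) le_rfl
  have hpos := SRes_sdiff_singleton_pos hlam
  refine ⟨fun i => div_pos hSm (hpos i), fun i j hij => ?_, fun i => ?_⟩
  · exact div_le_div_of_nonneg_left hSm.le (hpos i) (SRes_sdiff_singleton_le hlam (hanti i j hij))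
  · rw [div_inv_eq_mul, div_le_iff₀ (hpos i)]
    linarith [S_le_mul_SRes_sdiff_singleton hlam i]
end
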